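/- arXiv:2104.14596 — 4 statements merged into one kernel-verified Lean document; each statement's English description precedes it below -/
import Mathlib

section
/- Let H be a finite graph, p a prime, and α an automorphism of H of order p. Let H/α denote the quotient graph whose vertices are the orbits of the cyclic group generated by α on V(H), with two orbits adjacent if and only if some vertex of one is adjacent in H to some vertex of the other (so an orbit carries a self-loop if it contains two adjacent vertices). Then for every graph G without self-loops, the number of graph homomorphisms from H to G is congruent modulo p to the number of graph homomorphisms from H/α to G, where a homomorphism must map a vertex with a self-loop to a vertex with a self-loop, so that if H/α has a self-loop there are no homomorphisms from H/α to G. -/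
/-- Counting homomorphisms modulo `p` is invariant under taking the quotient of `H`
by an automorphism `α` of order `p`: homomorphisms from the quotient graph `H/α`
to a loopless graph `G` are exactly the maps on α-orbits respecting all adjacencies
of `H`, and their number is congruent to `#Hom(H,G)` modulo `p`. -/
theorem stmt7 (p : ℕ) (hp : p.Prime) {V W : Type*} [Finite V] [Finite W]
    (H : SimpleGraph V) (G : SimpleGraph W) (α : Equiv.Perm V)
    (hα : ∀ u v, H.Adj (α u) (α v) ↔ H.Adj u v) (horder : orderOf α = p) :
    Nat.card (H →g G) ≡
      Nat.card {φ : Quotient (MulAction.orbitRel (Subgroup.zpowers α) V) → W //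
        ∀ u v, H.Adj u v →
          G.Adj (φ (Quotient.mk (MulAction.orbitRel (Subgroup.zpowers α) V) u))
                (φ (Quotient.mk (MulAction.orbitRel (Subgroup.zpowers α) V) v))} [MOD p] := by
  classical
  haveI := Fact.mk hp
  -- The subgroup of adjacency-preserving permutations.
  set S : Subgroup (Equiv.Perm V) :=
    { carrier := {g | ∀ u v, H.Adj (g u) (g v) ↔ H.Adj u v}
      one_mem' := by intro u v; rfl
      mul_mem' := by
        intro g h hg hh u v
        exact (hg (h u) (h v)).trans (hh u v)
      inv_mem' := by
        intro g hg u v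
        conv_rhs => rw [← Equiv.apply_symm_apply g u, ← Equiv.apply_symm_apply g v]
        exact (hg _ _).symm } with hSdef
  have hS : Subgroup.zpowers α ≤ S := Subgroup.zpowers_le.mpr hα
  set Γ := Subgroup.zpowers α with hΓ
  have hmem : ∀ g : Γ, ∀ u v, H.Adj ((g : Equiv.Perm V) u) ((g : Equiv.Perm V) v) ↔ H.Adj u v :=
    fun g => hS g.2
  -- Γ acts on homomorphisms by precomposition with the inverse.
  letI : SMul Γ (H →g G) :=
    ⟨fun g φ => ⟨fun v => φ (((g⁻¹ : Γ) : Equiv.Perm V) v),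
      fun {u v} h => φ.map_rel ((hmem g⁻¹ u v).mpr h)⟩⟩
  have smul_apply : ∀ (g : Γ) (φ : H →g G) (v : V),
      (g • φ) v = φ (((g⁻¹ : Γ) : Equiv.Perm V) v) := fun _ _ _ => rfl
  letI : MulAction Γ (H →g G) :=
    { one_smul := by
        intro φ; ext v; simp [smul_apply]
      mul_smul := by
        intro g h φ; ext v
        simp [smul_apply, mul_inv_rev, Equiv.Perm.mul_apply] }
  have hΓcard : Nat.card Γ = p := by rw [hΓ, Nat.card_zpowers, horder]
  have hPG : IsPGroup p Γ := IsPGroup.of_card (by rw [hΓcard, pow_one])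
  have hfix : ∀ (φ : H →g G), φ ∈ MulAction.fixedPoints Γ (H →g G) →
      ∀ (g : Γ) (v : V), φ ((g : Equiv.Perm V) v) = φ v := by
    intro φ hφ g v
    have := congrArg (fun ψ : H →g G => ψ ((g : Equiv.Perm V) v)) (hφ g)
    simp only [smul_apply] at this
    simpa using this.symm
  -- Fixed points correspond to homs out of the quotient.
  have e : MulAction.fixedPoints Γ (H →g G) ≃
      {φ : Quotient (MulAction.orbitRel Γ V) → W //
        ∀ u v, H.Adj u v →
          G.Adj (φ (Quotient.mk (MulAction.orbitRel Γ V) u))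
                (φ (Quotient.mk (MulAction.orbitRel Γ V) v))} :=
    { toFun := fun φ =>
        ⟨Quotient.lift (φ : H →g G) (by
            intro u v huv
            obtain ⟨g, hg⟩ := huv
            exact hg ▸ hfix φ.1 φ.2 g v),
          fun u v h => (φ : H →g G).map_rel h⟩
      invFun := fun ψ =>
        ⟨⟨fun v => ψ.1 (Quotient.mk (MulAction.orbitRel Γ V) v),
            fun {u v} h => ψ.2 u v h⟩, by
          intro g
          ext v
          refine (smul_apply g _ v).trans ?_
          refine congrArg ψ.1 (Quotient.sound ?_)
          exact ⟨g⁻¹, rfl⟩⟩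
      left_inv := fun φ => by
        apply Subtype.ext; ext v; rfl
      right_inv := fun ψ => by
        apply Subtype.ext
        funext q
        induction q using Quotient.ind
        rfl }
  calc Nat.card (H →g G)
      ≡ Nat.card (MulAction.fixedPoints Γ (H →g G)) [MOD p] :=
        hPG.card_modEq_card_fixedPoints _
    _ = _ := Nat.card_congr e
end

section
/- Let p be a prime and let H and H' be finite graphs such that neither has an automorphism of order p. Suppose that for all finite graphs G, the number of homomorphisms from H to G is congruent to the number of homomorphisms from H' to G modulo p. Then H and H' are isomorphic. -/
/-!
Sorting the homomorphisms `H → G[s]` by their image gives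
`#Hom(H, G[s]) = ∑_{t ⊆ s} #{f : H → G with image t}`, so by strong induction on `s` the
hypothesis yields `#{f : H → G with image s} ≡ #{f : H' → G with image s} (mod p)` for every
finite graph `G` and vertex set `s`. For `G = H` and `s` all of `V`, the left side counts the
automorphisms of `H`, which by Cauchy's theorem is prime to `p`; hence some homomorphism
`H' → H` is surjective, and symmetrically some `H → H'` is. Two such maps between finite graphs
force an isomorphism, since an injective endomorphism of a finite graph permutes its finitely
many arcs and therefore reflects adjacency.
-/

open Function Finset

namespace SimpleGraph

variable {V V' W : Type*} {H : SimpleGraph V} {H' : SimpleGraph V'} {p : ℕ}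

theorem Hom.adj_iff_of_injective [Finite V] (c : H →g H) (hc : Injective c) {u v : V} :
    H.Adj (c u) (c v) ↔ H.Adj u v := by
  refine ⟨fun h => ?_, c.map_rel⟩
  let onArcs (x : {x : V × V // H.Adj x.1 x.2}) : {x : V × V // H.Adj x.1 x.2} :=
    ⟨(c x.1.1, c x.1.2), c.map_rel x.2⟩
  have hinj : Injective onArcs := by
    rintro ⟨⟨a, b⟩, _⟩ ⟨⟨a', b'⟩, _⟩ h
    simpa [onArcs, hc.eq_iff] using h
  obtain ⟨⟨⟨a, b⟩, hab⟩, heq⟩ :=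
    Finite.injective_iff_surjective.mp hinj ⟨(c u, c v), h⟩
  obtain ⟨rfl, rfl⟩ : a = u ∧ b = v := by simpa [onArcs, hc.eq_iff] using heq
  exact hab

theorem nonempty_iso_of_surjective [Finite V] {f : H →g H'} {g : H' →g H}
    (hf : Surjective f) (hg : Surjective g) : Nonempty (H ≃g H') := by
  have hgf : Injective (g ∘ f) := Finite.injective_iff_surjective.mpr (hg.comp hf)
  exact ⟨{ Equiv.ofBijective f ⟨hgf.of_comp, hf⟩ with
    map_rel_iff' :=
      ⟨fun h => ((g.comp f).adj_iff_of_injective hgf).mp (g.map_rel h), f.map_rel⟩ }⟩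

noncomputable def isoSelfEquivSurjective [Finite V] (H : SimpleGraph V) :
    (H ≃g H) ≃ {f : H →g H // Surjective f} where
  toFun φ := ⟨φ, φ.surjective⟩
  invFun f :=
    { Equiv.ofBijective f.1 ⟨Finite.injective_iff_surjective.mpr f.2, f.2⟩ with
      map_rel_iff' := f.1.adj_iff_of_injective (Finite.injective_iff_surjective.mpr f.2) }
  left_inv _ := by ext; rfl
  right_inv _ := by ext; rfl

theorem not_dvd_card_iso_self [Finite V] (hp : p.Prime)
    (hH : ¬ ∃ e : Equiv.Perm V, (∀ u v, H.Adj (e u) (e v) ↔ H.Adj u v) ∧ orderOf e = p) :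
    ¬ p ∣ Nat.card (H ≃g H) := by
  have : Fact p.Prime := ⟨hp⟩
  have : Finite (H ≃g H) := .of_equiv _ (isoSelfEquivSurjective H).symm
  intro hdvd
  obtain ⟨φ, hφ⟩ := exists_prime_orderOf_dvd_card' p hdvd
  let toPerm : (H ≃g H) →* Equiv.Perm V := ⟨⟨RelIso.toEquiv, rfl⟩, fun _ _ => rfl⟩
  have htoPerm : Injective toPerm := fun _ _ h => RelIso.toEquiv_injective h
  exact hH
    ⟨toPerm φ, fun _ _ => φ.map_rel_iff, (orderOf_injective toPerm htoPerm φ).trans hφ⟩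

theorem card_hom_induce_eq_sum_card_range [Finite V] [Finite W]
    (H : SimpleGraph V) (G : SimpleGraph W) (s : Finset W) :
    Nat.card (H →g G.induce s) =
      ∑ t ∈ s.powerset, Nat.card {f : H →g G // Set.range f = t} := by
  classical
  have := Fintype.ofFinite V
  have := Fintype.ofFinite (H →g G)
  let restrict : (H →g G.induce s) ≃ {f : H →g G // Set.range f ⊆ s} :=
    { toFun g := ⟨(Embedding.induce s).toHom.comp g, by rintro _ ⟨v, rfl⟩; exact (g v).2⟩
      invFun f := ⟨fun v => ⟨f.1 v, f.2 ⟨v, rfl⟩⟩, f.1.map_rel⟩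
      left_inv _ := rfl
      right_inv _ := rfl }
  rw [Nat.card_congr restrict, Nat.card_eq_fintype_card, Fintype.card_subtype]
  rw [card_eq_sum_card_fiberwise (f := fun f : H →g G => univ.image f) (t := s.powerset)]
  · refine sum_congr rfl fun t ht => ?_
    rw [Nat.card_eq_fintype_card, Fintype.card_subtype, filter_filter]
    congr 1
    ext f
    rw [mem_filter, mem_filter, ← Fintype.coe_image_univ, coe_subset, coe_inj]
    exact and_congr_right fun _ => ⟨And.right, fun h => ⟨h ▸ mem_powerset.mp ht, h⟩⟩
  · intro f hf
    simpa [Set.range_subset_iff] using hf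

theorem modEq_card_hom_of_forall_fin
    (hcong : ∀ (n : ℕ) (G : SimpleGraph (Fin n)),
      Nat.card (H →g G) ≡ Nat.card (H' →g G) [MOD p])
    [Finite W] (G : SimpleGraph W) : Nat.card (H →g G) ≡ Nat.card (H' →g G) [MOD p] := by
  obtain ⟨n, ⟨e⟩⟩ := Finite.exists_equiv_fin W
  let φ := Iso.map e G
  rw [Nat.card_congr (Iso.homCongr .refl φ), Nat.card_congr (Iso.homCongr .refl φ)]
  exact hcong n _

theorem card_hom_range_modEq [Finite V] [Finite V'] [Finite W]
    (hcong : ∀ (n : ℕ) (G : SimpleGraph (Fin n)),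
      Nat.card (H →g G) ≡ Nat.card (H' →g G) [MOD p])
    (G : SimpleGraph W) (s : Finset W) :
    Nat.card {f : H →g G // Set.range f = s} ≡
      Nat.card {f : H' →g G // Set.range f = s} [MOD p] := by
  classical
  induction s using Finset.strongInduction with
  | H s ih =>
    have hsum := card_hom_induce_eq_sum_card_range H G s
    have hsum' := card_hom_induce_eq_sum_card_range H' G s
    rw [← add_sum_erase _ _ (mem_powerset_self s)] at hsum hsum'
    have hsmaller : ∑ t ∈ s.powerset.erase s, Nat.card {f : H →g G // Set.range f = t}
        ≡ ∑ t ∈ s.powerset.erase s, Nat.card {f : H' →g G // Set.range f = t} [MOD p] :=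
      Nat.ModEq.sum fun t ht => ih t <| Finset.ssubset_iff_subset_ne.mpr
        ⟨mem_powerset.mp (mem_of_mem_erase ht), ne_of_mem_erase ht⟩
    exact hsmaller.add_right_cancel
      (hsum ▸ hsum' ▸ modEq_card_hom_of_forall_fin hcong (G.induce s))

theorem card_surjective_hom_modEq [Finite V] [Finite V'] [Finite W]
    (hcong : ∀ (n : ℕ) (G : SimpleGraph (Fin n)),
      Nat.card (H →g G) ≡ Nat.card (H' →g G) [MOD p])
    (G : SimpleGraph W) :
    Nat.card {f : H →g G // Surjective f} ≡
      Nat.card {f : H' →g G // Surjective f} [MOD p] := by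
  have := Fintype.ofFinite W
  simpa [Set.range_eq_univ] using card_hom_range_modEq hcong G univ

theorem nonempty_surjective_hom [Finite V] [Finite V'] (hp : p.Prime)
    (hH : ¬ ∃ e : Equiv.Perm V, (∀ u v, H.Adj (e u) (e v) ↔ H.Adj u v) ∧ orderOf e = p)
    (hcong : ∀ (n : ℕ) (G : SimpleGraph (Fin n)),
      Nat.card (H →g G) ≡ Nat.card (H' →g G) [MOD p]) :
    Nonempty {f : H' →g H // Surjective f} := by
  refine (Nat.card_ne_zero.mp fun hzero => ?_).1
  have hself := card_surjective_hom_modEq hcong H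
  rw [hzero, Nat.modEq_zero_iff_dvd, ← Nat.card_congr (isoSelfEquivSurjective H)]
    at hself
  exact not_dvd_card_iso_self hp hH hself

end SimpleGraph

/-- Modular Lovász criterion: if neither `H` nor `H'` has an automorphism of order `p`
and `#Hom(H,G) ≡ #Hom(H',G) (mod p)` for all finite graphs `G`, then `H ≅ H'`. -/
theorem stmt8 (p : ℕ) (hp : p.Prime) {V V' : Type*} [Fintype V] [Fintype V']
    (H : SimpleGraph V) (H' : SimpleGraph V')
    (hH : ¬ ∃ e : Equiv.Perm V, (∀ u v, H.Adj (e u) (e v) ↔ H.Adj u v) ∧ orderOf e = p)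
    (hH' : ¬ ∃ e : Equiv.Perm V', (∀ u v, H'.Adj (e u) (e v) ↔ H'.Adj u v) ∧ orderOf e = p)
    (hcong : ∀ (n : ℕ) (G : SimpleGraph (Fin n)),
      Nat.card (H →g G) ≡ Nat.card (H' →g G) [MOD p]) :
    Nonempty (H ≃g H') := by
  obtain ⟨g, hg⟩ := SimpleGraph.nonempty_surjective_hom hp hH hcong
  obtain ⟨f, hf⟩ := SimpleGraph.nonempty_surjective_hom hp hH' fun n G => (hcong n G).symm
  exact SimpleGraph.nonempty_iso_of_surjective hf hg
end

section
/- Let Γ be a finite group generated by a symmetric set S (S = S⁻¹), let G = C(Γ, S) be the Cayley graph, let σ be a partition of S, and let the fractured graph G♯σ be obtained by splitting each vertex v of G into one vertex v^B for each block B of σ, where v^B is incident to the edges {v, vg} for g ∈ B. Let 𝔅(σ) be the graph with one vertex w^B per block of σ and one edge {w^B, w^{B'}} for each unordered pair {g, g⁻¹} ⊆ S with g ∈ B and g⁻¹ ∈ B'. Then the map Ψ : G♯σ → 𝔅(σ), v^B ↦ w^B, is a surjective graph homomorphism that is a local isomorphism: the edges incident to v^B map bijectively to the edges incident to w^B. 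-/
/-- Adjacency of the fractured graph `G♯σ` of the Cayley graph `C(Γ,S)` with respect
to a partition of `S` given by its block map `β : S → B`: the vertex `v^b` is joined
to `(v·g)^{β(g⁻¹)}` for each generator `g` in the block `b`. -/
def fracAdj {Γ : Type*} [Group Γ] (S : Finset Γ) {B : Type*}
    (β : {g : Γ // g ∈ S} → B) (hsym : ∀ g ∈ S, g⁻¹ ∈ S) (x y : Γ × B) : Prop :=
  ∃ g : {g : Γ // g ∈ S}, β g = x.2 ∧
    y = (x.1 * (g : Γ), β ⟨(g : Γ)⁻¹, hsym g g.2⟩)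

/-- Adjacency of the base graph `𝔅(σ)`: one edge for each generator `g`, joining
the block of `g` to the block of `g⁻¹`. -/
def baseAdj {Γ : Type*} [Group Γ] (S : Finset Γ) {B : Type*}
    (β : {g : Γ // g ∈ S} → B) (hsym : ∀ g ∈ S, g⁻¹ ∈ S) (b c : B) : Prop :=
  ∃ g : {g : Γ // g ∈ S}, β g = b ∧ β ⟨(g : Γ)⁻¹, hsym g g.2⟩ = c

/-- The projection `Ψ : G♯σ → 𝔅(σ)`, `v^B ↦ w^B`, is a surjective graph
homomorphism and a local isomorphism: at every vertex `v^b`, the edges (indexed by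
the generators `g` with `β g = b`) map bijectively to the edges at `w^b` — every
base edge at `b` lifts to an edge at `v^b`, and distinct generators give distinct
edges at `v^b`. -/
theorem stmt12 {Γ : Type*} [Group Γ] [Finite Γ] (S : Finset Γ)
    (hsym : ∀ g ∈ S, g⁻¹ ∈ S) (hgen : Subgroup.closure (S : Set Γ) = ⊤)
    {B : Type*} (β : {g : Γ // g ∈ S} → B) (hβ : Function.Surjective β) :
    (∀ x y : Γ × B, fracAdj S β hsym x y → baseAdj S β hsym x.2 y.2) ∧
    Function.Surjective (Prod.snd : Γ × B → B) ∧
    (∀ (x : Γ × B) (g : {g : Γ // g ∈ S}), β g = x.2 →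
      fracAdj S β hsym x (x.1 * (g : Γ), β ⟨(g : Γ)⁻¹, hsym g g.2⟩)) ∧
    (∀ (x : Γ × B) (g g' : {g : Γ // g ∈ S}), β g = x.2 → β g' = x.2 →
      ((x.1 * (g : Γ), β ⟨(g : Γ)⁻¹, hsym g g.2⟩) : Γ × B) =
        (x.1 * (g' : Γ), β ⟨(g' : Γ)⁻¹, hsym g' g'.2⟩) →
      g = g') := by
  refine ⟨?_, ?_, ?_, ?_⟩
  · rintro x y ⟨g, hg, rfl⟩
    exact ⟨g, hg, rfl⟩
  · intro b
    obtain ⟨g, hg⟩ := hβ b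
    exact ⟨(1, b), rfl⟩
  · intro x g hg
    exact ⟨g, hg, rfl⟩
  · intro x g g' _ _ h
    have := congrArg Prod.fst h
    exact Subtype.ext (mul_left_cancel this)
end

section
/- Let Γ be a finite group of odd order generated by a symmetric set S, let G = C(Γ, S) be the Cayley graph, let σ be a partition of S, and let G♯σ and 𝔅(σ) be the fractured graph and base graph respectively. Then G♯σ is bipartite if and only if 𝔅(σ) is bipartite. -/
/-- Walks of a given length along a relation. -/
inductive RWalk {α : Type*} (R : α → α → Prop) : α → α → ℕ → Prop
  | nil (a : α) : RWalk R a a 0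
  | cons {a b c : α} {n : ℕ} : R a b → RWalk R b c n → RWalk R a c (n + 1)

lemma RWalk.append {α : Type*} {R : α → α → Prop} {a b c : α} {m n : ℕ}
    (h1 : RWalk R a b m) (h2 : RWalk R b c n) : RWalk R a c (m + n) := by
  induction h1 with
  | nil => simpa using h2
  | cons h w ih =>
    rw [Nat.add_right_comm]
    exact RWalk.cons h (ih h2)

lemma RWalk.reverse {α : Type*} {R : α → α → Prop} (hsymm : ∀ a b, R a b → R b a)
    {a b : α} {n : ℕ} (w : RWalk R a b n) : RWalk R b a n := by
  induction w with
  | nil a => exact RWalk.nil a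
  | @cons a x c k h w ih =>
    have h1 : RWalk R x a 1 := RWalk.cons (hsymm _ _ h) (RWalk.nil a)
    exact ih.append h1

/-- A proper 2-coloring forces colors along a walk to agree exactly for even lengths. -/
lemma RWalk.parity {α : Type*} {R : α → α → Prop} {c : α → Bool}
    (hc : ∀ x y, R x y → c x ≠ c y) {a b : α} {n : ℕ}
    (w : RWalk R a b n) : (c a = c b ↔ Even n) := by
  induction w with
  | nil a => simp
  | @cons a x y k h w ih =>
    have hax := hc _ _ h
    rw [Nat.even_add_one, ← ih]
    revert hax
    cases c a <;> cases c x <;> cases c y <;> simp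

/-- Bipartiteness from absence of odd closed walks, for a symmetric relation. -/
lemma exists_coloring_of_no_odd_closed_walk {α : Type*} {R : α → α → Prop}
    (hsymm : ∀ a b, R a b → R b a)
    (hno : ∀ a n, Odd n → ¬ RWalk R a a n) :
    ∃ c : α → Bool, ∀ a b, R a b → c a ≠ c b := by
  classical
  let s : Setoid α := ⟨fun a b => ∃ n, RWalk R a b n,
    ⟨fun a => ⟨0, RWalk.nil a⟩,
     fun ⟨n, w⟩ => ⟨n, w.reverse hsymm⟩,
     fun ⟨n, w⟩ ⟨m, w'⟩ => ⟨n + m, w.append w'⟩⟩⟩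
  let rep : α → α := fun a => (Quotient.mk s a).out
  have hrepw : ∀ a : α, ∃ n, RWalk R (rep a) a n := fun a => Quotient.mk_out a
  -- parity of walks from rep is well defined
  have hpar : ∀ (a : α) {n m : ℕ}, RWalk R (rep a) a n → RWalk R (rep a) a m →
      Even (n + m) := by
    intro a n m w1 w2
    by_contra hne
    exact hno (rep a) (n + m) (Nat.not_even_iff_odd.mp hne)
      (w1.append (w2.reverse hsymm))
  refine ⟨fun a => decide (∃ n, Odd n ∧ RWalk R (rep a) a n), ?_⟩
  intro a b hab
  have hrep : rep a = rep b := by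
    have : (Quotient.mk s a) = Quotient.mk s b :=
      Quotient.sound ⟨1, RWalk.cons hab (RWalk.nil b)⟩
    simp only [rep, this]
  obtain ⟨n, w⟩ := hrepw a
  simp only [ne_eq, decide_eq_decide]
  rcases Nat.even_or_odd n with hev | hod
  · -- no odd walk rep → a ; there is an odd walk rep → b
    intro hiff
    have hb : ∃ m, Odd m ∧ RWalk R (rep b) b m := by
      refine ⟨n + 1, by simpa using Even.add_one hev, ?_⟩
      rw [← hrep]
      exact w.append (RWalk.cons hab (RWalk.nil b))
    obtain ⟨m, hm, wm⟩ := hiff.mpr hb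
    have := hpar a wm w
    simp [Nat.even_add, Nat.odd_iff, Nat.even_iff] at this hm hev
    omega
  · -- there is an odd walk rep → a ; no odd walk rep → b
    intro hiff
    obtain ⟨m, hm, wm⟩ := hiff.mp ⟨n, hod, w⟩
    rw [hrep] at w
    have wb : RWalk R (rep b) b (n + 1) := w.append (RWalk.cons hab (RWalk.nil b))
    have := hpar b wm wb
    simp [Nat.even_add, Nat.odd_iff, Nat.even_iff] at this hm hod
    omega

lemma baseAdj_symm {Γ : Type*} [Group Γ] (S : Finset Γ) {B : Type*}
    (β : {g : Γ // g ∈ S} → B) (hsym : ∀ g ∈ S, g⁻¹ ∈ S) :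
    ∀ b c, baseAdj S β hsym b c → baseAdj S β hsym c b := by
  rintro b c ⟨g, hg1, hg2⟩
  refine ⟨⟨(g : Γ)⁻¹, hsym g g.2⟩, hg2, ?_⟩
  convert hg1 using 2
  exact Subtype.ext (inv_inv _)

/-- A walk in the base graph lifts, with a uniform translation element. -/
lemma base_walk_lift {Γ : Type*} [Group Γ] (S : Finset Γ) {B : Type*}
    (β : {g : Γ // g ∈ S} → B) (hsym : ∀ g ∈ S, g⁻¹ ∈ S) {b b' : B} {n : ℕ}
    (w : RWalk (baseAdj S β hsym) b b' n) :
    ∃ p : Γ, ∀ x : Γ, RWalk (fracAdj S β hsym) (x, b) (x * p, b') n := by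
  induction w with
  | nil a => exact ⟨1, fun x => by simpa using RWalk.nil (x, a)⟩
  | @cons b bm b' k h w ih =>
    obtain ⟨g, hg1, hg2⟩ := h
    obtain ⟨q, hq⟩ := ih
    refine ⟨(g : Γ) * q, fun x => ?_⟩
    have hedge : fracAdj S β hsym (x, b) (x * (g : Γ), bm) :=
      ⟨g, hg1, by rw [hg2]⟩
    have := RWalk.cons hedge (hq (x * (g : Γ)))
    rwa [mul_assoc] at this

/-- If `Γ` is a finite group of odd order with symmetric generating set `S`, then the
fractured graph `G♯σ` is bipartite (admits a proper 2-coloring) if and only if the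
base graph `𝔅(σ)` is bipartite. -/
theorem stmt14 {Γ : Type*} [Group Γ] [Finite Γ] (hodd : Odd (Nat.card Γ))
    (S : Finset Γ) (hsym : ∀ g ∈ S, g⁻¹ ∈ S)
    (hgen : Subgroup.closure (S : Set Γ) = ⊤)
    {B : Type*} (β : {g : Γ // g ∈ S} → B) (hβ : Function.Surjective β) :
    (∃ c : Γ × B → Bool, ∀ x y, fracAdj S β hsym x y → c x ≠ c y) ↔
    (∃ c : B → Bool, ∀ b b', baseAdj S β hsym b b' → c b ≠ c b') := by
  constructor
  · rintro ⟨c, hc⟩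
    refine exists_coloring_of_no_odd_closed_walk (baseAdj_symm S β hsym) ?_
    intro b n hn w
    obtain ⟨p, hp⟩ := base_walk_lift S β hsym w
    -- iterate the lifted walk
    have hiter : ∀ k : ℕ, ∀ x : Γ, RWalk (fracAdj S β hsym) (x, b) (x * p ^ k, b) (n * k) := by
      intro k
      induction k with
      | zero => intro x; simpa using RWalk.nil (x, b)
      | succ k ih =>
        intro x
        have := (ih x).append (hp (x * p ^ k))
        rw [Nat.mul_succ, pow_succ, ← mul_assoc]
        exact this
    have ho : Odd (orderOf p) := by
      rcases Nat.even_or_odd (orderOf p) with he | ho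
      · exfalso
        have hdvd : orderOf p ∣ Nat.card Γ := orderOf_dvd_natCard p
        rcases he with ⟨t, ht⟩
        have : (2 : ℕ) ∣ Nat.card Γ := dvd_trans ⟨t, by omega⟩ hdvd
        rw [Nat.odd_iff] at hodd
        omega
      · exact ho
    have hw : RWalk (fracAdj S β hsym) ((1 : Γ), b) ((1 : Γ), b) (n * orderOf p) := by
      have := hiter (orderOf p) 1
      rwa [pow_orderOf_eq_one, mul_one] at this
    have := (hw.parity hc).mp rfl
    rw [Nat.even_mul] at this
    rw [Nat.odd_iff] at hn ho
    rw [Nat.even_iff, Nat.even_iff] at this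
    omega
  · rintro ⟨c, hc⟩
    refine ⟨fun x => c x.2, ?_⟩
    rintro x y ⟨g, hg1, hg2⟩
    have : baseAdj S β hsym x.2 y.2 := ⟨g, hg1, by rw [hg2]⟩
    exact hc _ _ this
end
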